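/- arXiv:1408.1858 — 4 statements merged into one kernel-verified Lean document; each statement's English description precedes it below -/
import Mathlib

section
/- Let T and S be functors from C to A preserving finite products and let φ : T ⟶ S be a natural transformation. Then the objectwise cokernel functor Q : C ⥤ A, defined by Q(c) = coker(φ_c) with the induced action on morphisms, preserves finite products. -/
/-!
The cokernel of `φ` is the colimit of the parallel pair `φ, 0 : T ⟶ S`, and a colimit of functors
preserving limits of shape `K` again preserves them as soon as `colim` commutes with limits of
shape `K` in the target. In an abelian category finite products are biproducts, and `colim` is
additive, so it commutes with finite products.
-/

open CategoryTheory Limits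

namespace CategoryTheory.Limits

theorem preservesLimitsOfShape_colimit
    {J K C D : Type*} [Category* J] [Category* K] [Category* C] [Category* D]
    [HasColimitsOfShape J D] [PreservesLimitsOfShape K (colim : (J ⥤ D) ⥤ D)]
    (F : J ⥤ C ⥤ D) [∀ j, PreservesLimitsOfShape K (F.obj j)] :
    PreservesLimitsOfShape K (colimit F) := by
  have : PreservesLimitsOfShape K F.flip :=
    preservesLimitsOfShape_of_evaluation _ _ fun j =>
      inferInstanceAs (PreservesLimitsOfShape K (F.obj j))
  exact preservesLimitsOfShape_of_natIso (colimitIsoFlipCompColim F).symm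

end CategoryTheory.Limits

theorem cokernel_preservesFiniteProducts_general
    (C : Type*) [SmallCategory C]
    (A : Type*) [Category A] [Abelian A]
    (T S : C ⥤ A) [PreservesFiniteProducts T] [PreservesFiniteProducts S]
    (φ : T ⟶ S) :
    PreservesFiniteProducts (cokernel φ : C ⥤ A) := by
  refine ⟨fun n => ?_⟩
  have (j : WalkingParallelPair) :
      PreservesLimitsOfShape (Discrete (Fin n)) ((parallelPair φ 0).obj j) := by
    cases j <;> dsimp <;> infer_instance
  exact preservesLimitsOfShape_colimit (parallelPair φ 0)

/-- Let `C` be a small category with finite products and `A` an abelian category.  If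
`T S : C ⥤ A` preserve finite products and `φ : T ⟶ S` is a natural transformation, then
the cokernel of `φ` in the functor category (which is computed objectwise, i.e. its value
at `c` is `coker (φ.app c)`) again preserves finite products. -/
theorem cokernel_preservesFiniteProducts
    (C : Type*) [SmallCategory C] [HasFiniteProducts C]
    (A : Type*) [Category A] [Abelian A]
    (T S : C ⥤ A) [PreservesFiniteProducts T] [PreservesFiniteProducts S]
    (φ : T ⟶ S) :
    PreservesFiniteProducts (cokernel φ : C ⥤ A) :=
  cokernel_preservesFiniteProducts_general C A T S φ
end

section
/- Let T and S be objects of FPFunct(C, A) and φ : T ⟶ S a morphism between them. Let K be the objectwise kernel of φ (which again preserves finite products) and κ : K ⟶ T the natural transformation whose components are the kernel inclusions. Then κ is a kernel of φ in the category FPFunct(C, A): for every product-preserving functor L and every natural transformation λ : L ⟶ T with λ ≫ φ = 0, there is a unique natural transformation λ' : L ⟶ K with λ = λ' ≫ κ. -/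
open CategoryTheory Limits

/-!
Limits in `C ⥤ A` are computed objectwise, so `kernel φ ≅ (parallelPair φ 0).flip ⋙ lim`.
Each component of `(parallelPair φ 0).flip` at a point of the shape is `T` or `S`, so it
preserves finite products, and `lim` preserves them as a right adjoint; hence so does the
kernel. Since finite-product-preserving functors form a full subcategory of `C ⥤ A`, the
kernel inclusion is a kernel there as well.
-/

theorem preservesLimitsOfShape_limit {K C A : Type*} [Category K] [Category C] [Category A]
    (J : Type*) [Category J] [HasLimitsOfShape K A] (F : K ⥤ C ⥤ A)
    [∀ k, PreservesLimitsOfShape J (F.obj k)] : PreservesLimitsOfShape J (limit F) :=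
  have : PreservesLimitsOfShape J F.flip :=
    preservesLimitsOfShape_of_evaluation _ _ fun k =>
      preservesLimitsOfShape_of_natIso (flipCompEvaluation F k).symm
  have : PreservesLimitsOfShape J (lim : (K ⥤ A) ⥤ A) :=
    constLimAdj.rightAdjoint_preservesLimits.preservesLimitsOfShape
  preservesLimitsOfShape_of_natIso (limitIsoFlipCompLim F).symm

theorem preservesLimitsOfShape_kernel {C A : Type*} [Category C] [Category A]
    [HasZeroMorphisms A] [HasLimitsOfShape WalkingParallelPair A] (J : Type*) [Category J]
    {T S : C ⥤ A} [PreservesLimitsOfShape J T] [PreservesLimitsOfShape J S] (φ : T ⟶ S) :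
    PreservesLimitsOfShape J (kernel φ) :=
  have : ∀ k, PreservesLimitsOfShape J ((parallelPair φ 0).obj k) := fun
    | .zero => ‹PreservesLimitsOfShape J T›
    | .one => ‹PreservesLimitsOfShape J S›
  preservesLimitsOfShape_limit J _

theorem preservesFiniteProducts_kernel {C A : Type*} [Category C] [Category A]
    [HasZeroMorphisms A] [HasLimitsOfShape WalkingParallelPair A]
    {T S : C ⥤ A} [PreservesFiniteProducts T] [PreservesFiniteProducts S] (φ : T ⟶ S) :
    PreservesFiniteProducts (kernel φ) :=
  ⟨fun _ => preservesLimitsOfShape_kernel _ φ⟩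

theorem kernel_universal_in_FPFunct_general
    (C : Type*) [SmallCategory C]
    (A : Type*) [Category A] [Abelian A]
    (T S : C ⥤ A) [PreservesFiniteProducts T] [PreservesFiniteProducts S]
    (φ : T ⟶ S) :
    PreservesFiniteProducts (kernel φ : C ⥤ A) ∧
    ∀ (L : C ⥤ A), PreservesFiniteProducts L →
      ∀ (l : L ⟶ T), l ≫ φ = 0 →
        ∃! l' : L ⟶ kernel φ, l' ≫ kernel.ι φ = l :=
  ⟨preservesFiniteProducts_kernel φ, fun _ _ l hl =>
    ⟨kernel.lift φ l hl, kernel.lift_ι φ l hl, fun _ h =>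
      (cancel_mono (kernel.ι φ)).1 (h.trans (kernel.lift_ι φ l hl).symm)⟩⟩

/-- Let `C` be a small category with finite products and `A` an abelian category.  Let
`T S : C ⥤ A` preserve finite products, `φ : T ⟶ S`, and let `K = ker φ` be the
objectwise kernel of `φ` (which again preserves finite products) with kernel inclusion
`κ = kernel.ι φ : K ⟶ T`.  Then `κ` is a kernel of `φ` in the full subcategory of
finite-product-preserving functors: for every finite-product-preserving `L : C ⥤ A` and
every `λ : L ⟶ T` with `λ ≫ φ = 0` there is a unique `λ' : L ⟶ K` with `λ' ≫ κ = λ`. -/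
theorem kernel_universal_in_FPFunct
    (C : Type*) [SmallCategory C] [HasFiniteProducts C]
    (A : Type*) [Category A] [Abelian A]
    (T S : C ⥤ A) [PreservesFiniteProducts T] [PreservesFiniteProducts S]
    (φ : T ⟶ S) :
    PreservesFiniteProducts (kernel φ : C ⥤ A) ∧
    ∀ (L : C ⥤ A), PreservesFiniteProducts L →
      ∀ (l : L ⟶ T), l ≫ φ = 0 →
        ∃! l' : L ⟶ kernel φ, l' ≫ kernel.ι φ = l :=
  kernel_universal_in_FPFunct_general C A T S φ
end

section
/- A morphism φ : T ⟶ S in FPFunct(C, A) is a monomorphism in FPFunct(C, A) if and only if every component φ_c is a monomorphism in A, and φ is an epimorphism in FPFunct(C, A) if and only if every component φ_c is an epimorphism in A. -/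
/-!
Pullbacks and pushouts in `C ⥤ A` are computed pointwise, and in `C ⥤ A` a natural
transformation is mono (epi) iff all its components are. Finite products commute with all
limits, and in the abelian category `A` they are biproducts, so they also commute with
colimits. Hence the functors preserving finite products are closed under pullbacks and
pushouts in `C ⥤ A`, so the fully faithful inclusion `FPFunct C A ⥤ (C ⥤ A)` preserves, and
reflects, monomorphisms and epimorphisms.
-/

open CategoryTheory Limits

/-- `FPFunct C A` is the full subcategory of `C ⥤ A` consisting of the functors
preserving finite products. -/
abbrev FPFunct (C : Type*) [Category C] (A : Type*) [Category A] :=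
  ObjectProperty.FullSubcategory (fun F : C ⥤ A => PreservesFiniteProducts F)

namespace CategoryTheory.ObjectProperty

variable {J C : Type*} (K K' : Type*) [Category* K] [Category* K'] [Category* J] [Category* C]

instance [HasLimitsOfShape K' C] :
    (preservesLimitsOfShape K : ObjectProperty (J ⥤ C)).IsClosedUnderLimitsOfShape K' where
  limitsOfShape_le := by
    rintro G ⟨h⟩
    have := h.prop_diag_obj
    have : PreservesLimitsOfShape K h.diag.flip := ⟨fun {F} ↦ ⟨fun {c} hc ↦
      ⟨evaluationJointlyReflectsLimits _
        (fun k' ↦ isLimitOfPreserves (h.diag.obj k') hc)⟩⟩⟩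
    exact preservesLimitsOfShape_of_natIso
      ((limitIsoFlipCompLim h.diag).symm ≪≫ (limit.isLimit _).conePointUniqueUpToIso h.isLimit)

abbrev preservesFiniteProducts : ObjectProperty (J ⥤ C) := PreservesFiniteProducts

instance [HasLimitsOfShape K' C] :
    (preservesFiniteProducts : ObjectProperty (J ⥤ C)).IsClosedUnderLimitsOfShape K' where
  limitsOfShape_le := by
    rintro G ⟨h⟩
    have := h.prop_diag_obj
    exact ⟨fun _ ↦ (preservesLimitsOfShape _).prop_of_isLimit h.isLimit inferInstance⟩

instance [HasColimitsOfShape K' C] [PreservesFiniteProducts (colim : (K' ⥤ C) ⥤ C)] :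
    (preservesFiniteProducts : ObjectProperty (J ⥤ C)).IsClosedUnderColimitsOfShape K' where
  colimitsOfShape_le := by
    rintro G ⟨h⟩
    have := h.prop_diag_obj
    exact ⟨fun _ ↦ (preservesLimitsOfShape _).prop_of_isColimit h.isColimit inferInstance⟩

end CategoryTheory.ObjectProperty

theorem fpfunct_mono_epi_iff_componentwise_general
    (C : Type*) [SmallCategory C]
    (A : Type*) [Category A] [Abelian A]
    (T S : FPFunct C A) (φ : T ⟶ S) :
    (Mono φ ↔ ∀ c : C, Mono (φ.hom.app c)) ∧
    (Epi φ ↔ ∀ c : C, Epi (φ.hom.app c)) := by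
  let ι := ObjectProperty.ι (fun F : C ⥤ A => PreservesFiniteProducts F)
  have : ι.PreservesMonomorphisms := preservesMonomorphisms_of_preservesLimitsOfShape ι
  have : ι.PreservesEpimorphisms := preservesEpimorphisms_of_preservesColimitsOfShape ι
  exact ⟨(ι.mono_map_iff_mono φ).symm.trans (NatTrans.mono_iff_mono_app _),
    (ι.epi_map_iff_epi φ).symm.trans (NatTrans.epi_iff_epi_app _)⟩

/-- Let `C` be a small category with finite products and `A` an abelian category.  A
morphism `φ : T ⟶ S` in `FPFunct C A` is a monomorphism there iff all of its components
are monomorphisms in `A`, and an epimorphism there iff all of its components are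
epimorphisms in `A`. -/
theorem fpfunct_mono_epi_iff_componentwise
    (C : Type*) [SmallCategory C] [HasFiniteProducts C]
    (A : Type*) [Category A] [Abelian A]
    (T S : FPFunct C A) (φ : T ⟶ S) :
    (Mono φ ↔ ∀ c : C, Mono (φ.hom.app c)) ∧
    (Epi φ ↔ ∀ c : C, Epi (φ.hom.app c)) :=
  fpfunct_mono_epi_iff_componentwise_general C A T S φ
end

section
/- Every morphism φ : T ⟶ S in FPFunct(C, A) factors as an epimorphism followed by a monomorphism within FPFunct(C, A); in particular, the objectwise image functor I : C ⥤ A, defined by I(c) = im(φ_c) with the induced action on morphisms, preserves finite products, and φ factors through I as an objectwise epimorphism followed by an objectwise monomorphism. -/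
/-!
The comparison map `I(∏ cⱼ) ⟶ ∏ I(cⱼ)` of the image functor sits between those of `T` and `S`,
which are isomorphisms. Naturality of `T ⟶ I` makes it the second factor of an epimorphism
(finite products of epimorphisms are epimorphisms, being biproducts), and naturality of `I ⟶ S`
the first factor of a monomorphism. An abelian category is balanced, so it is an isomorphism.
-/

open CategoryTheory Limits

namespace CategoryTheory.Limits

variable {C D : Type*} [Category C] [Category D] {F G : C ⥤ D} {J : Type*} (f : J → C)

lemma app_comp_piComparison (α : F ⟶ G) [HasProduct f] [HasProduct fun j => F.obj (f j)]
    [HasProduct fun j => G.obj (f j)] :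
    α.app (∏ᶜ f) ≫ piComparison G f = piComparison F f ≫ Pi.map fun j => α.app (f j) := by
  ext j
  simp only [Category.assoc, piComparison_comp_π, Pi.map_π, piComparison_comp_π_assoc,
    α.naturality]

lemma epi_piComparison_of_epi_app [HasZeroMorphisms D] (α : F ⟶ G) [HasProduct f]
    [HasBiproduct fun j => F.obj (f j)] [HasBiproduct fun j => G.obj (f j)]
    [IsIso (piComparison F f)] [∀ j, Epi (α.app (f j))] :
    Epi (piComparison G f) := by
  have : Epi (α.app (∏ᶜ f) ≫ piComparison G f) := by
    rw [app_comp_piComparison]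
    infer_instance
  exact epi_of_epi (α.app _) _

lemma mono_piComparison_of_mono_app (α : F ⟶ G) [HasProduct f]
    [HasProduct fun j => F.obj (f j)] [HasProduct fun j => G.obj (f j)]
    [IsIso (piComparison G f)] [Mono (α.app (∏ᶜ f))] :
    Mono (piComparison F f) := by
  have : Mono (piComparison F f ≫ Pi.map fun j => α.app (f j)) := by
    rw [← app_comp_piComparison]
    infer_instance
  exact mono_of_mono _ (Pi.map fun j => α.app (f j))

end CategoryTheory.Limits

lemma preservesFiniteProducts_of_epi_app_of_mono_app {C A : Type*} [Category C]
    [HasFiniteProducts C] [Category A] [Abelian A] {T I S : C ⥤ A}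
    [PreservesFiniteProducts T] [PreservesFiniteProducts S] (e : T ⟶ I) (m : I ⟶ S)
    [∀ c, Epi (e.app c)] [∀ c, Mono (m.app c)] :
    PreservesFiniteProducts I where
  preserves n := by
    have := Abelian.hasFiniteBiproducts (C := A)
    have (f : Fin n → C) : PreservesLimit (Discrete.functor f) I := by
      have := epi_piComparison_of_epi_app f e
      have := mono_piComparison_of_mono_app f m
      have : IsIso (piComparison I f) := isIso_of_mono_of_epi _
      exact PreservesProduct.of_iso_comparison I f
    exact preservesLimitsOfShape_of_discrete I

/-- Let `C` be a small category with finite products and `A` an abelian category, and let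
`T S : C ⥤ A` preserve finite products.  Every natural transformation `φ : T ⟶ S` factors,
within the finite-product-preserving functors, as an epimorphism followed by a
monomorphism: the objectwise image functor `image φ` (whose value at `c` is `im (φ.app c)`)
preserves finite products, and `φ` factors through it as an objectwise epimorphism
followed by an objectwise monomorphism. -/
theorem fpfunct_epi_mono_factorisation
    (C : Type*) [SmallCategory C] [HasFiniteProducts C]
    (A : Type*) [Category A] [Abelian A]
    (T S : C ⥤ A) [PreservesFiniteProducts T] [PreservesFiniteProducts S]
    (φ : T ⟶ S) :
    PreservesFiniteProducts (image φ : C ⥤ A) ∧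
    (∀ c : C, Epi ((factorThruImage φ).app c)) ∧
    (∀ c : C, Mono ((image.ι φ).app c)) ∧
    factorThruImage φ ≫ image.ι φ = φ :=
  ⟨preservesFiniteProducts_of_epi_app_of_mono_app (factorThruImage φ) (image.ι φ),
    fun _ => inferInstance, fun _ => inferInstance, image.fac φ⟩
end
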